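/- Suppose player II has a winning strategy τ in the measure game G(s,A). Then for every ε > 0 there exists a tree T_ε ⊆ 2^{<ω} such that μ([T_ε]) > 1 − s − ε and every branch through T_ε is the sequence of II's moves in some run of G(s,A) consistent with τ; in particular [T_ε] ⊆ A, and consequently μ_*(A) ≥ 1 − s. -/

import Mathlib

open MeasureTheory

namespace MeasureGame

/-- Cantor space `2^ω`. -/
abbrev Cantor : Type := ℕ → Bool

/-- The basic cylinder set `N_t` determined by a finite binary string `t`. -/
def cyl (t : List Bool) : Set Cantor := {x | ∀ i : Fin t.length, x i.1 = t.get i}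

/-- A round of the measure game: player I's pair of rationals, then player II's bit. -/
abbrev GRound : Type := (ℚ × ℚ) × Bool

/-- A strategy for player I in the measure game. -/
abbrev StratI : Type := List GRound → ℚ × ℚ

/-- A strategy for player II in the measure game. -/
abbrev StratII : Type := List GRound → ℚ × ℚ → Bool

/-- A run of the measure game. -/
abbrev Run : Type := ℕ → GRound

/-- The history (list of completed rounds) before round `n`. -/
def hist (r : Run) (n : ℕ) : List GRound := (List.range n).map r

/-- Player II's bit at round `n`. -/
def bits (r : Run) (n : ℕ) : Bool := (r n).2

/-- The finite binary string of player II's first `n` bits. -/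
def path (r : Run) (n : ℕ) : List Bool := (List.range n).map (bits r)

/-- The value player I assigned at round `n` to the one-bit extension of the current path by `b`. -/
def valI (r : Run) (n : ℕ) (b : Bool) : ℚ := if b then (r n).1.2 else (r n).1.1

/-- The value selected by player II's move at round `n`. -/
def sel (r : Run) (n : ℕ) : ℚ := valI r n (bits r n)

/-- Legality requirements on the single value player I assigned to `path r n ++ [b]`:
it is nonnegative, at most `μ(N_{t⌢b})`, and strictly below it when the latter is positive. -/
def mOK (μ : Measure Cantor) (r : Run) (n : ℕ) (b : Bool) : Prop :=
  0 ≤ valI r n b ∧ ((valI r n b : ℝ) ≤ (μ (cyl (path r n ++ [b]))).toReal) ∧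
    (0 < (μ (cyl (path r n ++ [b]))).toReal → (valI r n b : ℝ) < (μ (cyl (path r n ++ [b]))).toReal)

/-- Player I's move at round `n` of a run is legal (for the game `G(s, ·)`). -/
def IOK (μ : Measure Cantor) (s : ℝ) (r : Run) : ℕ → Prop
  | 0 => mOK μ r 0 false ∧ mOK μ r 0 true ∧ s < ((r 0).1.1 : ℝ) + ((r 0).1.2 : ℝ)
  | (n + 1) => mOK μ r (n + 1) false ∧ mOK μ r (n + 1) true ∧
      (r (n + 1)).1.1 + (r (n + 1)).1.2 = sel r n

/-- Player II's move at round `n` of a run is legal: the selected value is nonzero. -/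
def IIOK (r : Run) (n : ℕ) : Prop := sel r n ≠ 0

/-- The run `r` is consistent with player I's strategy `σ`. -/
def ConsI (σ : StratI) (r : Run) : Prop := ∀ n, (r n).1 = σ (hist r n)

/-- The run `r` is consistent with player II's strategy `τ`. -/
def ConsII (τ : StratII) (r : Run) : Prop := ∀ n, (r n).2 = τ (hist r n) (r n).1

/-- Player II wins the run `r` of `G(s, A)`: either player I is the first to break a rule,
or all rules are followed and the sequence of II's bits belongs to `A`. -/
def IIWinsRun (μ : Measure Cantor) (s : ℝ) (A : Set Cantor) (r : Run) : Prop :=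
  (∃ n, (∀ m < n, IOK μ s r m ∧ IIOK r m) ∧ ¬ IOK μ s r n) ∨
    ((∀ n, IOK μ s r n ∧ IIOK r n) ∧ bits r ∈ A)

/-- Player I has a winning strategy in the measure game `G(s, A)`. -/
def WinsI (μ : Measure Cantor) (s : ℝ) (A : Set Cantor) : Prop :=
  ∃ σ : StratI, ∀ r : Run, ConsI σ r → ¬ IIWinsRun μ s A r

/-- Player II has a winning strategy in the measure game `G(s, A)`. -/
def WinsII (μ : Measure Cantor) (s : ℝ) (A : Set Cantor) : Prop :=
  ∃ τ : StratII, ∀ r : Run, ConsII τ r → IIWinsRun μ s A r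

/-- The outer measure `μ*(A) = inf {μ(U) : U open, A ⊆ U}`. -/
noncomputable def outerM (μ : Measure Cantor) (A : Set Cantor) : ℝ :=
  sInf {v : ℝ | ∃ U : Set Cantor, IsOpen U ∧ A ⊆ U ∧ v = (μ U).toReal}

/-- The inner measure `μ_*(A) = sup {μ(F) : F closed, F ⊆ A}`. -/
noncomputable def innerM (μ : Measure Cantor) (A : Set Cantor) : ℝ :=
  sSup {v : ℝ | ∃ F : Set Cantor, IsClosed F ∧ F ⊆ A ∧ v = (μ F).toReal}


/-- A tree on `2^{<ω}`: a set of finite binary strings closed under initial segments. -/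
def IsTree (T : Set (List Bool)) : Prop := ∀ t ∈ T, ∀ u : List Bool, u <+: t → u ∈ T

/-- The set of infinite branches through a set `T` of finite binary strings. -/
def branches (T : Set (List Bool)) : Set Cantor := {x | ∀ n : ℕ, (List.range n).map x ∈ T}

/-!
Fix a rational `v₀ = m_∅` slightly above `s`. Player I grows a tree of plays against `τ`: at a
node with current mass `v`, let `I_b` be the infimum of the masses I can put on side `b` and still
have `τ` choose `b` (or `μ(N_{t⌢b})` if `τ` never does). A winning `τ` never selects mass `0`, so
`I₀ + I₁ ≤ v`: otherwise I could split `v` below both infima. Playing moves that nearly attain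
`I_b`, the unclaimed measure `μ(N_t) - v` passes to the live children up to errors `κ / 4^{|t|+1}`,
so every level of the tree covers measure at least `1 - v₀ - κ`. Each branch is the sequence of
II's bits in a run in which I never breaks a rule, hence it lies in `A`.
-/

section Cylinders

lemma mem_cyl {t : List Bool} {x : Cantor} :
    x ∈ cyl t ↔ (List.range t.length).map x = t := by
  refine ⟨fun hx => List.ext_getElem (by simp) fun i _ hi => by simpa using hx ⟨i, hi⟩,
    fun h i => ?_⟩
  simpa using List.getElem_of_eq h (i := i.1) (by simp)

lemma cyl_nil : cyl [] = Set.univ := by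
  ext x; simp [cyl]

lemma cyl_subset_cyl {t u : List Bool} (h : t <+: u) : cyl u ⊆ cyl t := by
  obtain ⟨w, rfl⟩ := h
  intro x hx i
  simpa [List.getElem_append, i.2] using hx ⟨i.1, by simp; omega⟩

lemma isClosed_cyl (t : List Bool) : IsClosed (cyl t) := by
  have : cyl t = ⋂ i : Fin t.length, (fun x : Cantor => x i.1) ⁻¹' {t.get i} := by
    ext x; simp [cyl]
  rw [this]
  exact isClosed_iInter fun i => isClosed_singleton.preimage (continuous_apply i.1)

lemma measurableSet_cyl (t : List Bool) : MeasurableSet (cyl t) :=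
  (isClosed_cyl t).measurableSet

lemma cyl_eq_union (t : List Bool) : cyl t = cyl (t ++ [false]) ∪ cyl (t ++ [true]) := by
  ext x
  simp only [mem_cyl, Set.mem_union, List.length_append, List.length_singleton,
    List.range_succ, List.map_append, List.map_singleton]
  constructor
  · intro h
    cases hb : x t.length <;> simp [h]
  · rintro (h | h) <;> exact (List.append_inj h (by simp)).1

lemma disjoint_cyl (t : List Bool) : Disjoint (cyl (t ++ [false])) (cyl (t ++ [true])) := by
  rw [Set.disjoint_left]
  intro x h0 h1
  rw [mem_cyl] at h0 h1
  have : t ++ [false] = t ++ [true] := h0.symm.trans (by simpa using h1)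
  simp at this

lemma measureReal_cyl (μ : Measure Cantor) [IsFiniteMeasure μ] (t : List Bool) :
    μ.real (cyl t) = μ.real (cyl (t ++ [false])) + μ.real (cyl (t ++ [true])) := by
  rw [cyl_eq_union t, measureReal_union (disjoint_cyl t) (measurableSet_cyl _)]

end Cylinders

section LevelSets

variable {T : Set (List Bool)} {t : List Bool} {n : ℕ}

def levelSet (T : Set (List Bool)) (t : List Bool) (n : ℕ) : Set Cantor :=
  ⋃ w ∈ {w : List Bool | w.length = n ∧ t ++ w ∈ T}, cyl (t ++ w)

lemma isClosed_levelSet : IsClosed (levelSet T t n) :=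
  ((List.finite_length_eq Bool n).subset fun _ hw => hw.1).isClosed_biUnion
    fun _ _ => isClosed_cyl _

lemma levelSet_subset_cyl : levelSet T t n ⊆ cyl t :=
  Set.iUnion₂_subset fun w _ => cyl_subset_cyl ⟨w, rfl⟩

lemma levelSet_zero (ht : t ∈ T) : levelSet T t 0 = cyl t := by
  ext; simp [levelSet, ht]

lemma levelSet_succ :
    levelSet T t (n + 1) = levelSet T (t ++ [false]) n ∪ levelSet T (t ++ [true]) n := by
  ext x
  simp only [levelSet, Set.mem_union, Set.mem_iUnion, Set.mem_ofPred_eq, exists_prop]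
  constructor
  · rintro ⟨_ | ⟨b, w⟩, ⟨hlen, hw⟩, hx⟩
    · simp at hlen
    · rw [← List.singleton_append, ← List.append_assoc] at hw hx
      cases b
      · exact Or.inl ⟨w, ⟨by simpa using hlen, hw⟩, hx⟩
      · exact Or.inr ⟨w, ⟨by simpa using hlen, hw⟩, hx⟩
  · rintro (⟨w, ⟨hlen, hw⟩, hx⟩ | ⟨w, ⟨hlen, hw⟩, hx⟩) <;>
      exact ⟨_ :: w, ⟨by simpa using hlen, by simpa using hw⟩, by simpa using hx⟩

lemma levelSet_eq_empty (hT : IsTree T) (ht : t ∉ T) : levelSet T t n = ∅ := by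
  simp only [levelSet, Set.iUnion_eq_empty]
  exact fun w hw => absurd (hT _ hw.2 t (List.prefix_append t w)) ht

lemma levelSet_succ_subset (hT : IsTree T) : levelSet T t (n + 1) ⊆ levelSet T t n := by
  refine Set.iUnion₂_subset fun w ⟨hlen, hw⟩ => ?_
  have hpre : t ++ w.take n <+: t ++ w := (List.prefix_append_right_inj t).2 (List.take_prefix n w)
  exact (cyl_subset_cyl hpre).trans
    (Set.subset_biUnion_of_mem (u := fun w => cyl (t ++ w)) ⟨by simp [hlen], hT _ hw _ hpre⟩)

lemma branches_eq_iInter_levelSet : branches T = ⋂ n, levelSet T [] n := by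
  ext x
  simp only [branches, levelSet, Set.mem_ofPred_eq, Set.mem_iInter, Set.mem_iUnion,
    List.nil_append, exists_prop, mem_cyl]
  refine forall_congr' fun n => ⟨fun h => ⟨_, ⟨by simp, h⟩, by simp⟩, ?_⟩
  rintro ⟨w, ⟨rfl, hw⟩, hx⟩
  rwa [hx]

lemma isClosed_branches : IsClosed (branches T) :=
  branches_eq_iInter_levelSet ▸ isClosed_iInter fun _ => isClosed_levelSet

variable (μ : Measure Cantor)

theorem sub_le_measureReal_levelSet [IsFiniteMeasure μ] (hT : IsTree T) {f : List Bool → ℝ}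
    (hf : ∀ t ∈ T, 0 ≤ f t)
    (hstep : ∀ t ∈ T, μ.real (cyl t) - f t ≤
      ∑ b : Bool, T.indicator (fun u => μ.real (cyl u) - f u) (t ++ [b])) (n : ℕ) :
    ∀ t ∈ T, μ.real (cyl t) - f t ≤ μ.real (levelSet T t n) := by
  induction n with
  | zero => intro t ht; rw [levelSet_zero ht]; linarith [hf t ht]
  | succ n ih =>
    intro t ht
    have hchild (b : Bool) : T.indicator (fun u => μ.real (cyl u) - f u) (t ++ [b]) ≤
        μ.real (levelSet T (t ++ [b]) n) := by
      by_cases hb : t ++ [b] ∈ T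
      · rw [Set.indicator_of_mem hb]; exact ih _ hb
      · rw [Set.indicator_of_notMem hb, levelSet_eq_empty hT hb, measureReal_empty]
    have hdisj : Disjoint (levelSet T (t ++ [false]) n) (levelSet T (t ++ [true]) n) :=
      (disjoint_cyl t).mono levelSet_subset_cyl levelSet_subset_cyl
    calc μ.real (cyl t) - f t ≤ _ := hstep t ht
      _ ≤ ∑ b : Bool, μ.real (levelSet T (t ++ [b]) n) := Finset.sum_le_sum fun b _ => hchild b
      _ = μ.real (levelSet T t (n + 1)) := by
        rw [Fintype.sum_bool, levelSet_succ,
          measureReal_union hdisj isClosed_levelSet.measurableSet, add_comm]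

theorem le_measureReal_branches [IsProbabilityMeasure μ] (hT : IsTree T) (hnil : [] ∈ T)
    {f : List Bool → ℝ} (hf : ∀ t ∈ T, 0 ≤ f t)
    (hstep : ∀ t ∈ T, μ.real (cyl t) - f t ≤
      ∑ b : Bool, T.indicator (fun u => μ.real (cyl u) - f u) (t ++ [b])) :
    1 - f [] ≤ μ.real (branches T) := by
  have hlevel (n : ℕ) : 1 - f [] ≤ μ.real (levelSet T [] n) := by
    simpa [cyl_nil] using sub_le_measureReal_levelSet μ hT hf hstep n [] hnil
  have hlim := tendsto_measure_iInter_atTop (μ := μ) (s := levelSet T [])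
    (fun n => isClosed_levelSet.measurableSet.nullMeasurableSet)
    (antitone_nat_of_succ_le fun n => levelSet_succ_subset hT) ⟨0, measure_ne_top μ _⟩
  rw [← branches_eq_iInter_levelSet] at hlim
  exact ge_of_tendsto' ((ENNReal.tendsto_toReal (measure_ne_top μ _)).comp hlim) hlevel

end LevelSets

section Positions

def posBits (h : List GRound) : List Bool := h.map Prod.snd

def mass (p : ℚ × ℚ) (b : Bool) : ℚ := if b then p.2 else p.1

/-- The mass that player I's next pair must add up to: the one II selected last, or `v₀`
(playing the role of `m_∅`) at the start. -/
def currentMass (v₀ : ℚ) (h : List GRound) : ℚ :=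
  match h.getLast? with
  | none => v₀
  | some g => mass g.1 g.2

@[simp] lemma currentMass_nil (v₀ : ℚ) : currentMass v₀ [] = v₀ := rfl

@[simp] lemma currentMass_append_singleton (v₀ : ℚ) (h : List GRound) (g : GRound) :
    currentMass v₀ (h ++ [g]) = mass g.1 g.2 := by
  simp [currentMass]

@[simp] lemma mass_zero (b : Bool) : mass 0 b = 0 := by
  cases b <;> rfl

variable (μ : Measure Cantor)

def LegalMass (u : List Bool) (m : ℚ) : Prop :=
  0 ≤ m ∧ (m : ℝ) ≤ μ.real (cyl u) ∧ (0 < μ.real (cyl u) → (m : ℝ) < μ.real (cyl u))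

def LegalMove (v₀ : ℚ) (h : List GRound) (p : ℚ × ℚ) : Prop :=
  (∀ b, LegalMass μ (posBits h ++ [b]) (mass p b)) ∧ p.1 + p.2 = currentMass v₀ h

variable {μ}

lemma legalMass_of_eq_zero_or_lt {u : List Bool} {m : ℚ} (hm : 0 ≤ m)
    (h : m = 0 ∨ (m : ℝ) < μ.real (cyl u)) : LegalMass μ u m := by
  rcases h with rfl | h
  · exact ⟨le_rfl, by simp, fun h => by simpa using h⟩
  · exact ⟨hm, h.le, fun _ => h⟩

lemma legalMove_zero {v₀ : ℚ} {h : List GRound} (hv : currentMass v₀ h = 0) :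
    LegalMove μ v₀ h 0 :=
  ⟨fun b => legalMass_of_eq_zero_or_lt (by simp) (by simp), by simp [hv]⟩

lemma posBits_hist (r : Run) (n : ℕ) : posBits (hist r n) = path r n := by
  simp only [posBits, hist, path, List.map_map]
  rfl

lemma currentMass_hist_succ (v₀ : ℚ) (r : Run) (n : ℕ) :
    currentMass v₀ (hist r (n + 1)) = sel r n := by
  simp only [hist, List.range_succ, List.map_append, List.map_singleton,
    currentMass_append_singleton]
  rfl

lemma iok_of_legalMove {s : ℝ} {v₀ : ℚ} (hs : s < v₀) {r : Run} {n : ℕ}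
    (h : LegalMove μ v₀ (hist r n) (r n).1) : IOK μ s r n := by
  obtain ⟨hmass, hsum⟩ := h
  rw [posBits_hist] at hmass
  cases n with
  | zero =>
    refine ⟨hmass false, hmass true, ?_⟩
    have : ((r 0).1.1 : ℝ) + (r 0).1.2 = v₀ := by exact_mod_cast hsum
    linarith
  | succ n => exact ⟨hmass false, hmass true, hsum.trans (currentMass_hist_succ v₀ r n)⟩

lemma IIWinsRun.of_forall_IOK {s : ℝ} {A : Set Cantor} {r : Run} (hw : IIWinsRun μ s A r)
    (hI : ∀ n, IOK μ s r n) : (∀ n, IIOK r n) ∧ bits r ∈ A := by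
  rcases hw with ⟨n, -, hn⟩ | ⟨hall, hA⟩
  · exact absurd (hI n) hn
  · exact ⟨fun n => (hall n).2, hA⟩

end Positions

section Plays

variable {μ : Measure Cantor} (τ : StratII) {s : ℝ} {A : Set Cantor} {v₀ : ℚ}

def play (ps : List (ℚ × ℚ)) : List GRound :=
  ps.foldl (fun h p => h ++ [(p, τ h p)]) []

@[simp] lemma play_nil : play τ [] = [] := rfl

@[simp] lemma play_append_singleton (ps : List (ℚ × ℚ)) (p : ℚ × ℚ) :
    play τ (ps ++ [p]) = play τ ps ++ [(p, τ (play τ ps) p)] := by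
  simp [play]

@[simp] lemma length_play (ps : List (ℚ × ℚ)) : (play τ ps).length = ps.length := by
  induction ps using List.reverseRecOn <;> simp [*]

def playRun (a : ℕ → ℚ × ℚ) : Run :=
  fun n => (a n, τ (play τ ((List.range n).map a)) (a n))

lemma hist_playRun (a : ℕ → ℚ × ℚ) (n : ℕ) :
    hist (playRun τ a) n = play τ ((List.range n).map a) := by
  induction n with
  | zero => rfl
  | succ n ih =>
    simp only [hist, List.range_succ, List.map_append, List.map_singleton] at ih ⊢
    rw [ih, play_append_singleton]
    rfl

lemma consII_playRun (a : ℕ → ℚ × ℚ) : ConsII τ (playRun τ a) := fun n => by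
  rw [hist_playRun]
  rfl

variable {τ}

theorem winning_playRun (hτ : ∀ r : Run, ConsII τ r → IIWinsRun μ s A r) (hs : s < v₀)
    {a : ℕ → ℚ × ℚ} (ha : ∀ n, LegalMove μ v₀ (play τ ((List.range n).map a)) (a n)) :
    (∀ n, mass (a n) (τ (play τ ((List.range n).map a)) (a n)) ≠ 0) ∧ bits (playRun τ a) ∈ A :=
  (hτ _ (consII_playRun τ a)).of_forall_IOK
    fun n => iok_of_legalMove hs (by rw [hist_playRun]; exact ha n)

variable (μ τ v₀)

def LegalPlay (ps : List (ℚ × ℚ)) : Prop :=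
  ∀ k (hk : k < ps.length), LegalMove μ v₀ (play τ (ps.take k)) ps[k]

variable {μ τ v₀}

lemma LegalPlay.nil : LegalPlay μ τ v₀ [] := fun _ hk => absurd hk (by simp)

lemma LegalPlay.append_singleton {ps : List (ℚ × ℚ)} {p : ℚ × ℚ} (hps : LegalPlay μ τ v₀ ps)
    (hp : LegalMove μ v₀ (play τ ps) p) : LegalPlay μ τ v₀ (ps ++ [p]) := by
  intro k hk
  rcases Nat.lt_or_ge k ps.length with hlt | hge
  · simpa [List.getElem_append_left hlt, List.take_append_of_le_length hlt.le] using hps k hlt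
  · obtain rfl : k = ps.length := by simp at hk; omega
    simpa using hp

lemma currentMass_play_nonneg (hv₀ : 0 ≤ v₀) {ps : List (ℚ × ℚ)} (hps : LegalPlay μ τ v₀ ps) :
    0 ≤ currentMass v₀ (play τ ps) := by
  induction ps using List.reverseRecOn with
  | nil => exact hv₀
  | append_singleton ps p _ =>
    have hp : LegalMove μ v₀ (play τ ps) p := by simpa using hps ps.length (by simp)
    simpa using (hp.1 _).1

/-- If II ever selected a zero mass, player I could pass `(0, 0)` forever and II would lose. -/
theorem mass_choice_ne_zero (hτ : ∀ r : Run, ConsII τ r → IIWinsRun μ s A r) (hs : s < v₀)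
    {ps : List (ℚ × ℚ)} {p : ℚ × ℚ} (hps : LegalPlay μ τ v₀ ps)
    (hp : LegalMove μ v₀ (play τ ps) p) : mass p (τ (play τ ps) p) ≠ 0 := by
  intro hzero
  set qs := ps ++ [p]
  set a : ℕ → ℚ × ℚ := fun n => qs.getD n 0
  have hprefix (n : ℕ) (hn : n ≤ qs.length) : (List.range n).map a = qs.take n :=
    List.ext_getElem (by simp; omega) fun i h1 _ => by
      simp only [List.getElem_map, List.getElem_range, List.getElem_take, a]
      exact List.getD_eq_getElem _ _ _
  have hafter (m : ℕ) : currentMass v₀ (play τ ((List.range (qs.length + m)).map a)) = 0 := by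
    induction m with
    | zero => rw [add_zero, hprefix _ le_rfl, List.take_length]; simpa [qs] using hzero
    | succ m ih =>
      rw [← add_assoc, List.range_succ, List.map_append, List.map_singleton,
        play_append_singleton, currentMass_append_singleton]
      simp [a]
  have ha (n : ℕ) : LegalMove μ v₀ (play τ ((List.range n).map a)) (a n) := by
    rcases Nat.lt_or_ge n qs.length with hlt | hge
    · rw [hprefix n hlt.le, show a n = qs[n] from List.getD_eq_getElem _ _ hlt]
      exact hps.append_singleton hp n hlt
    · obtain ⟨m, rfl⟩ := Nat.exists_eq_add_of_le hge
      simpa [a, List.getD_eq_default] using legalMove_zero (hafter m)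
  have hps' : (List.range ps.length).map a = ps := by rw [hprefix _ (by simp [qs])]; simp [qs]
  have hp' : a ps.length = p := by simp [a, qs]
  have := (winning_playRun hτ hs ha).1 ps.length
  rw [hps', hp'] at this
  exact this hzero

end Plays

section Acceptance

variable (μ : Measure Cantor) (τ : StratII) (v₀ : ℚ)

def accepted (h : List GRound) (b : Bool) : Set ℝ :=
  {x | ∃ p, LegalMove μ v₀ h p ∧ τ h p = b ∧ x = mass p b}

/-- The cap `μ(N_{t⌢b})` is the value taken when `τ` never chooses `b`. -/
noncomputable def infAccepted (h : List GRound) (b : Bool) : ℝ :=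
  sInf (insert (μ.real (cyl (posBits h ++ [b]))) (accepted μ τ v₀ h b))

variable {μ τ v₀} {h : List GRound} {b : Bool}

lemma nonneg_of_mem_insert_accepted {x : ℝ}
    (hx : x ∈ insert (μ.real (cyl (posBits h ++ [b]))) (accepted μ τ v₀ h b)) : 0 ≤ x := by
  rcases hx with rfl | ⟨p, hp, -, rfl⟩
  · exact measureReal_nonneg
  · exact_mod_cast (hp.1 b).1

lemma bddBelow_insert_accepted :
    BddBelow (insert (μ.real (cyl (posBits h ++ [b]))) (accepted μ τ v₀ h b)) :=
  ⟨0, fun _ => nonneg_of_mem_insert_accepted⟩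

lemma infAccepted_le_measureReal : infAccepted μ τ v₀ h b ≤ μ.real (cyl (posBits h ++ [b])) :=
  csInf_le bddBelow_insert_accepted (Set.mem_insert _ _)

lemma infAccepted_le_mass {p : ℚ × ℚ} (hp : LegalMove μ v₀ h p) :
    infAccepted μ τ v₀ h (τ h p) ≤ mass p (τ h p) :=
  csInf_le bddBelow_insert_accepted (Set.mem_insert_of_mem _ ⟨p, hp, rfl, rfl⟩)

lemma exists_mass_lt_infAccepted_add {δ : ℝ} (hδ : 0 < δ) (hne : (accepted μ τ v₀ h b).Nonempty) :
    ∃ p, LegalMove μ v₀ h p ∧ τ h p = b ∧ (mass p b : ℝ) < infAccepted μ τ v₀ h b + δ := by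
  have hle : sInf (accepted μ τ v₀ h b) ≤ μ.real (cyl (posBits h ++ [b])) := by
    obtain ⟨_, p, hp, hpb, rfl⟩ := hne
    exact (csInf_le ⟨0, fun _ hx => nonneg_of_mem_insert_accepted (Or.inr hx)⟩
      ⟨p, hp, hpb, rfl⟩).trans (hp.1 b).2.1
  have hinf : infAccepted μ τ v₀ h b = sInf (accepted μ τ v₀ h b) := by
    rw [infAccepted, csInf_insert ⟨0, fun _ hx => nonneg_of_mem_insert_accepted (Or.inr hx)⟩ hne,
      inf_eq_right.2 hle]
  obtain ⟨_, ⟨p, hp, hpb, rfl⟩, hlt⟩ :=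
    exists_lt_of_csInf_lt hne (by rw [← hinf]; exact lt_add_of_pos_right _ hδ)
  exact ⟨p, hp, hpb, hlt⟩

lemma infAccepted_eq_of_accepted_eq_empty (hempty : accepted μ τ v₀ h b = ∅) :
    infAccepted μ τ v₀ h b = μ.real (cyl (posBits h ++ [b])) := by
  rw [infAccepted, hempty, insert_empty_eq, csInf_singleton]

lemma exists_split_below {v : ℚ} (hv : 0 ≤ v) {I : Bool → ℝ} (hI : (v : ℝ) < I false + I true) :
    ∃ p : ℚ × ℚ, p.1 + p.2 = v ∧ ∀ b, 0 ≤ mass p b ∧ (mass p b = 0 ∨ (mass p b : ℝ) < I b) := by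
  obtain ⟨q, hq₁, hq₂⟩ := exists_rat_btwn (show (v : ℝ) - I true < I false by linarith)
  rcases le_total v q with hvq | hqv
  · refine ⟨(v, 0), by simp, fun b => ?_⟩
    cases b
    · exact ⟨hv, Or.inr (lt_of_le_of_lt (by exact_mod_cast hvq) hq₂)⟩
    · exact ⟨le_rfl, Or.inl rfl⟩
  rcases le_total q 0 with hq0 | hq0
  · refine ⟨(0, v), by simp, fun b => ?_⟩
    cases b
    · exact ⟨le_rfl, Or.inl rfl⟩
    · have : (q : ℝ) ≤ 0 := by exact_mod_cast hq0
      exact ⟨hv, Or.inr (by simp only [mass, if_true]; linarith)⟩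
  · refine ⟨(q, v - q), by simp, fun b => ?_⟩
    cases b
    · exact ⟨hq0, Or.inr hq₂⟩
    · exact ⟨by simpa [mass] using hqv, Or.inr (by simp [mass]; linarith)⟩

variable {s : ℝ} {A : Set Cantor}

/-- Were the two infima too large, I could split the current mass below both of them, and
`τ` would have to select a side on which I put mass `0`. -/
theorem infAccepted_add_le (hτ : ∀ r : Run, ConsII τ r → IIWinsRun μ s A r) (hs : s < v₀)
    {ps : List (ℚ × ℚ)} (hps : LegalPlay μ τ v₀ ps) (hv : 0 ≤ currentMass v₀ (play τ ps)) :
    infAccepted μ τ v₀ (play τ ps) false + infAccepted μ τ v₀ (play τ ps) true ≤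
      currentMass v₀ (play τ ps) := by
  by_contra! hlt
  obtain ⟨p, hsum, hp⟩ := exists_split_below hv hlt
  have hlegal : LegalMove μ v₀ (play τ ps) p := by
    refine ⟨fun b => legalMass_of_eq_zero_or_lt (hp b).1 ?_, hsum⟩
    exact (hp b).2.imp_right fun h => h.trans_le infAccepted_le_measureReal
  have hne := mass_choice_ne_zero hτ hs hps hlegal
  exact (((hp _).2.resolve_left hne).trans_le (infAccepted_le_mass hlegal)).false

end Acceptance

section StrategyTree

variable (μ : Measure Cantor) (τ : StratII) (v₀ : ℚ) (κ : ℝ)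

open Classical in
noncomputable def extendPlay (ps : List (ℚ × ℚ)) (b : Bool) : Option (List (ℚ × ℚ)) :=
  if h : ∃ p, LegalMove μ v₀ (play τ ps) p ∧ τ (play τ ps) p = b ∧
      (mass p b : ℝ) < infAccepted μ τ v₀ (play τ ps) b + κ / 4 ^ (ps.length + 1) then
    some (ps ++ [h.choose])
  else none

noncomputable def treePlay (t : List Bool) : Option (List (ℚ × ℚ)) :=
  t.foldlM (extendPlay μ τ v₀ κ) []

def strategyTree : Set (List Bool) := {t | (treePlay μ τ v₀ κ t).isSome}

/-- Besides the mass of the node, `κ / 4 ^ |t|` absorbs the errors of the approximate infima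
below `t`: `2 ^ k` nodes at depth `|t| + k`, each off by at most `2 κ / 4 ^ (|t| + k + 1)`. -/
noncomputable def treeSlack (t : List Bool) : ℝ :=
  ((treePlay μ τ v₀ κ t).map fun ps => (currentMass v₀ (play τ ps) : ℝ)).getD 0 +
    κ / 4 ^ t.length

variable {μ τ v₀ κ}

@[simp] lemma treePlay_nil : treePlay μ τ v₀ κ [] = some [] := rfl

lemma treePlay_append_singleton (t : List Bool) (b : Bool) :
    treePlay μ τ v₀ κ (t ++ [b]) = (treePlay μ τ v₀ κ t).bind (extendPlay μ τ v₀ κ · b) := by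
  simp [treePlay, List.foldlM_append]

lemma isTree_strategyTree : IsTree (strategyTree μ τ v₀ κ) := by
  rintro _ ht u ⟨w, rfl⟩
  simp only [strategyTree, treePlay, List.foldlM_append, Set.mem_ofPred_eq] at ht ⊢
  cases h : List.foldlM (extendPlay μ τ v₀ κ) [] u <;> simp_all

lemma extendPlay_eq_some {ps qs : List (ℚ × ℚ)} {b : Bool}
    (h : extendPlay μ τ v₀ κ ps b = some qs) :
    ∃ p, qs = ps ++ [p] ∧ LegalMove μ v₀ (play τ ps) p ∧ τ (play τ ps) p = b ∧
      (mass p b : ℝ) < infAccepted μ τ v₀ (play τ ps) b + κ / 4 ^ (ps.length + 1) := by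
  unfold extendPlay at h
  split_ifs at h with hex
  exact ⟨hex.choose, (Option.some.inj h).symm, hex.choose_spec⟩

lemma infAccepted_eq_of_extendPlay_eq_none (hκ : 0 < κ) {ps : List (ℚ × ℚ)} {b : Bool}
    (h : extendPlay μ τ v₀ κ ps b = none) :
    infAccepted μ τ v₀ (play τ ps) b = μ.real (cyl (posBits (play τ ps) ++ [b])) := by
  refine infAccepted_eq_of_accepted_eq_empty (Set.not_nonempty_iff_eq_empty.1 fun hne => ?_)
  unfold extendPlay at h
  rw [dif_pos (exists_mass_lt_infAccepted_add (by positivity) hne)] at h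
  exact Option.some_ne_none _ h

lemma treePlay_spec {t : List Bool} {ps : List (ℚ × ℚ)} (h : treePlay μ τ v₀ κ t = some ps) :
    LegalPlay μ τ v₀ ps ∧ posBits (play τ ps) = t := by
  induction t using List.reverseRecOn generalizing ps with
  | nil =>
    obtain rfl : [] = ps := by simpa using h
    exact ⟨LegalPlay.nil, rfl⟩
  | append_singleton t b ih =>
    rw [treePlay_append_singleton] at h
    obtain ⟨ps₀, h₀, hext⟩ := Option.bind_eq_some_iff.1 h
    obtain ⟨p, rfl, hp, hpb, -⟩ := extendPlay_eq_some hext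
    obtain ⟨hps₀, hbits⟩ := ih h₀
    exact ⟨hps₀.append_singleton hp, by simp [posBits, ← hbits, hpb]⟩

end StrategyTree

section TreeMeasure

variable {μ : Measure Cantor} {τ : StratII} {v₀ : ℚ} {κ : ℝ}

lemma sub_infAccepted_le_indicator (hκ : 0 < κ) {t : List Bool} {ps : List (ℚ × ℚ)}
    (ht : treePlay μ τ v₀ κ t = some ps) (hbits : posBits (play τ ps) = t) (b : Bool) :
    μ.real (cyl (t ++ [b])) - infAccepted μ τ v₀ (play τ ps) b - 2 * (κ / 4 ^ (t.length + 1)) ≤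
      (strategyTree μ τ v₀ κ).indicator
        (fun u => μ.real (cyl u) - treeSlack μ τ v₀ κ u) (t ++ [b]) := by
  have hlen : ps.length = t.length := by rw [← hbits]; simp [posBits]
  have hchild := treePlay_append_singleton (μ := μ) (τ := τ) (v₀ := v₀) (κ := κ) t b
  rw [ht, Option.bind_some] at hchild
  have hκ' : 0 < κ / 4 ^ (t.length + 1) := by positivity
  cases hext : extendPlay μ τ v₀ κ ps b with
  | none =>
    have hdead : t ++ [b] ∉ strategyTree μ τ v₀ κ := by simp [strategyTree, hchild, hext]
    rw [Set.indicator_of_notMem hdead, infAccepted_eq_of_extendPlay_eq_none hκ hext, hbits]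
    linarith
  | some qs =>
    obtain ⟨p, rfl, -, hpb, hlt⟩ := extendPlay_eq_some hext
    have hlive : t ++ [b] ∈ strategyTree μ τ v₀ κ := by simp [strategyTree, hchild, hext]
    rw [Set.indicator_of_mem hlive]
    simp only [treeSlack, hchild, hext, play_append_singleton, currentMass_append_singleton,
      hpb, Option.map_some, Option.getD_some, List.length_append, List.length_singleton]
    rw [hlen] at hlt
    linarith

theorem measureReal_cyl_sub_treeSlack_le [IsFiniteMeasure μ] {s : ℝ} {A : Set Cantor}
    (hτ : ∀ r : Run, ConsII τ r → IIWinsRun μ s A r) (hs : s < v₀) (hv₀ : 0 ≤ v₀) (hκ : 0 < κ)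
    {t : List Bool} (ht : t ∈ strategyTree μ τ v₀ κ) :
    μ.real (cyl t) - treeSlack μ τ v₀ κ t ≤ ∑ b : Bool, (strategyTree μ τ v₀ κ).indicator
      (fun u => μ.real (cyl u) - treeSlack μ τ v₀ κ u) (t ++ [b]) := by
  obtain ⟨ps, hps⟩ := Option.isSome_iff_exists.1 ht
  obtain ⟨hlegal, hbits⟩ := treePlay_spec hps
  have hkey := infAccepted_add_le hτ hs hlegal (currentMass_play_nonneg hv₀ hlegal)
  have hslack : treeSlack μ τ v₀ κ t = currentMass v₀ (play τ ps) + κ / 4 ^ t.length := by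
    simp [treeSlack, hps]
  have hκ4 : κ / 4 ^ t.length = 4 * (κ / 4 ^ (t.length + 1)) := by
    rw [pow_succ]; field_simp
  rw [Fintype.sum_bool, hslack]
  linarith [measureReal_cyl μ t, sub_infAccepted_le_indicator hκ hps hbits true,
    sub_infAccepted_le_indicator hκ hps hbits false]

theorem le_measureReal_branches_strategyTree [IsProbabilityMeasure μ] {s : ℝ} {A : Set Cantor}
    (hτ : ∀ r : Run, ConsII τ r → IIWinsRun μ s A r) (hs : s < v₀) (hv₀ : 0 ≤ v₀) (hκ : 0 < κ) :
    1 - v₀ - κ ≤ μ.real (branches (strategyTree μ τ v₀ κ)) := by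
  have hnonneg (t : List Bool) (ht : t ∈ strategyTree μ τ v₀ κ) : 0 ≤ treeSlack μ τ v₀ κ t := by
    obtain ⟨ps, hps⟩ := Option.isSome_iff_exists.1 ht
    have := currentMass_play_nonneg hv₀ (treePlay_spec hps).1
    simp only [treeSlack, hps, Option.map_some, Option.getD_some]
    positivity
  have := le_measureReal_branches μ isTree_strategyTree (by simp [strategyTree]) hnonneg
    fun t ht => measureReal_cyl_sub_treeSlack_le hτ hs hv₀ hκ ht
  simp only [treeSlack, treePlay_nil, Option.map_some, Option.getD_some, play_nil,
    currentMass_nil, List.length_nil, pow_zero, div_one] at this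
  linarith

theorem exists_legal_of_mem_branches {x : Cantor} (hx : x ∈ branches (strategyTree μ τ v₀ κ)) :
    ∃ a : ℕ → ℚ × ℚ, (∀ n, LegalMove μ v₀ (play τ ((List.range n).map a)) (a n)) ∧
      bits (playRun τ a) = x := by
  choose P hP using fun n => Option.isSome_iff_exists.1 (hx n)
  have hstep (n : ℕ) : ∃ p, P (n + 1) = P n ++ [p] ∧ LegalMove μ v₀ (play τ (P n)) p ∧
      τ (play τ (P n)) p = x n := by
    have h := hP (n + 1)
    rw [List.range_succ, List.map_append, List.map_singleton, treePlay_append_singleton, hP n,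
      Option.bind_some] at h
    obtain ⟨p, hp, hlegal, hpb, -⟩ := extendPlay_eq_some h
    exact ⟨p, hp, hlegal, hpb⟩
  choose a ha using hstep
  have hprefix (n : ℕ) : (List.range n).map a = P n := by
    induction n with
    | zero => simpa using hP 0
    | succ n ih => rw [List.range_succ, List.map_append, ih, (ha n).1, List.map_singleton]
  refine ⟨a, fun n => hprefix n ▸ (ha n).2.1, funext fun n => ?_⟩
  change τ (play τ ((List.range n).map a)) (a n) = x n
  rw [hprefix]
  exact (ha n).2.2

end TreeMeasure

lemma measureReal_le_innerM (μ : Measure Cantor) [IsFiniteMeasure μ] {F A : Set Cantor}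
    (hF : IsClosed F) (hFA : F ⊆ A) : μ.real F ≤ innerM μ A :=
  le_csSup ⟨μ.real Set.univ, by rintro _ ⟨F, -, -, rfl⟩; exact measureReal_mono (Set.subset_univ F)⟩
    ⟨F, hF, hFA, rfl⟩

theorem tree_of_winning_II_general (μ : Measure Cantor) [IsProbabilityMeasure μ]
    (A : Set Cantor) (s : ℝ) (hs0 : 0 ≤ s) (τ : StratII)
    (hτ : ∀ r : Run, ConsII τ r → IIWinsRun μ s A r) :
    (∀ ε : ℝ, 0 < ε → ∃ T : Set (List Bool), IsTree T ∧
      1 - s - ε < (μ (branches T)).toReal ∧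
      (∀ x ∈ branches T, ∃ r : Run, ConsII τ r ∧ bits r = x) ∧
      branches T ⊆ A) ∧
    1 - s ≤ innerM μ A := by
  have htree (ε : ℝ) (hε : 0 < ε) : ∃ T : Set (List Bool), IsTree T ∧
      1 - s - ε < μ.real (branches T) ∧
      (∀ x ∈ branches T, ∃ r : Run, ConsII τ r ∧ bits r = x) ∧ branches T ⊆ A := by
    obtain ⟨v₀, hsv, hvε⟩ := exists_rat_btwn (by linarith : s < s + ε / 2)
    have hv₀ : (0 : ℚ) ≤ v₀ := by exact_mod_cast hs0.trans hsv.le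
    have hμ := le_measureReal_branches_strategyTree hτ hsv hv₀ (half_pos hε)
    refine ⟨strategyTree μ τ v₀ (ε / 2), isTree_strategyTree, by linarith, fun x hx => ?_,
      fun x hx => ?_⟩
    · obtain ⟨a, -, rfl⟩ := exists_legal_of_mem_branches hx
      exact ⟨_, consII_playRun τ a, rfl⟩
    · obtain ⟨a, ha, rfl⟩ := exists_legal_of_mem_branches hx
      exact (winning_playRun hτ hsv ha).2
  refine ⟨htree, le_of_forall_pos_le_add fun ε hε => ?_⟩
  obtain ⟨T, -, hμT, -, hTA⟩ := htree ε hε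
  linarith [measureReal_le_innerM μ isClosed_branches hTA]

/-- If `τ` is a winning strategy for player II in `G(s, A)`, then for every `ε > 0` there is a
tree `T_ε` with `μ([T_ε]) > 1 - s - ε`, every branch of which is the sequence of II's moves in
some run consistent with `τ`; in particular `[T_ε] ⊆ A`, and consequently `μ_*(A) ≥ 1 - s`. -/
theorem tree_of_winning_II (μ : Measure Cantor) [IsProbabilityMeasure μ]
    (A : Set Cantor) (s : ℝ) (hs0 : 0 ≤ s) (hs1 : s < 1) (τ : StratII)
    (hτ : ∀ r : Run, ConsII τ r → IIWinsRun μ s A r) :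
    (∀ ε : ℝ, 0 < ε → ∃ T : Set (List Bool), IsTree T ∧
      1 - s - ε < (μ (branches T)).toReal ∧
      (∀ x ∈ branches T, ∃ r : Run, ConsII τ r ∧ bits r = x) ∧
      branches T ⊆ A) ∧
    1 - s ≤ innerM μ A :=
  tree_of_winning_II_general μ A s hs0 τ hτ

end MeasureGame
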